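/- (Linear-size encoding.) Let φ be a single-variable regular-membership formula over alphabet α whose atom occurrences are recognized by NFAs with state types Q₁, …, Q_k. Then the set {x : List α | x satisfies φ} is the language of a Boolean finite automaton whose state type is the disjoint sum Q₁ ⊕ ⋯ ⊕ Q_k; in particular, if each Qⱼ is finite with nⱼ states, the BFA has exactly n₁ + ⋯ + n_k states, linear in the size of the input problem. -/

import Mathlib

/-- A Boolean finite automaton over alphabet `α` with state type `Q`. -/
structure BFA (α : Type) (Q : Type) where
  I : (Q → Prop) → Prop
  F : Q → Prop
  δ : Q → α → (Q → Prop) → Prop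

/-- A word `w` is accepted by the BFA `B` iff, after substituting transitions for states
symbol by symbol starting from the initial Boolean function, the resulting Boolean function
holds on the final assignment. -/
def BFA.Accepts {α Q : Type} (B : BFA α Q) (w : List α) : Prop :=
  (List.foldl (fun G a => fun v => G (fun q => B.δ q a v)) B.I w) B.F

/-- Single-variable regular-membership formulas over alphabet `α`:
conjunction, disjunction, negation, and atoms `x ∈ L` where the regular
language `L` is presented by an NFA with a finite state type. -/
inductive RegFormula (α : Type) : Type 1
  | atom : (σ : Type) → Fintype σ → NFA α σ → RegFormula α
  | and : RegFormula α → RegFormula α → RegFormula α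
  | or : RegFormula α → RegFormula α → RegFormula α
  | not : RegFormula α → RegFormula α

/-- Satisfaction of a single-variable regular-membership formula by a word `x`,
with the evident Boolean semantics and `x ∈ L` interpreted as language membership. -/
def RegFormula.Sat {α : Type} (x : List α) : RegFormula α → Prop
  | atom _ _ M => x ∈ M.accepts
  | and φ ψ => φ.Sat x ∧ ψ.Sat x
  | or φ ψ => φ.Sat x ∨ ψ.Sat x
  | not φ => ¬ φ.Sat x

/-- The state type of the BFA built for a formula: the disjoint sum `Q₁ ⊕ ⋯ ⊕ Q_k` of the
state types of the NFAs at the atom occurrences. -/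
def RegFormula.States {α : Type} : RegFormula α → Type
  | atom σ _ _ => σ
  | and φ ψ => φ.States ⊕ ψ.States
  | or φ ψ => φ.States ⊕ ψ.States
  | not φ => φ.States

/-- The state type of a formula is finite. -/
def RegFormula.statesFintype {α : Type} : (φ : RegFormula α) → Fintype φ.States
  | atom _ inst _ => inst
  | and φ ψ => @instFintypeSum _ _ φ.statesFintype ψ.statesFintype
  | or φ ψ => @instFintypeSum _ _ φ.statesFintype ψ.statesFintype
  | not φ => φ.statesFintype

/-- The total number `n₁ + ⋯ + n_k` of states of the NFAs at the atom occurrences. -/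
def RegFormula.sumAtomCards {α : Type} : RegFormula α → ℕ
  | atom σ inst _ => @Fintype.card σ inst
  | and φ ψ => φ.sumAtomCards + ψ.sumAtomCards
  | or φ ψ => φ.sumAtomCards + ψ.sumAtomCards
  | not φ => φ.sumAtomCards

/-!
Reading the fold in `BFA.Accepts` backwards, a BFA accepts `w` iff its initial Boolean function
holds on the assignment `q ↦ "q accepts w"`, and that assignment is computed state by state from
the transitions. An NFA is a BFA whose transitions and initial function are disjunctions. Boolean
connectives then cost no states: run two BFAs side by side on the disjoint sum of their states
and apply the connective to their initial functions only.
-/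

namespace BFA

variable {α Q Q₁ Q₂ : Type}

/-- `B.accepting w q` holds iff the state `q` accepts the word `w`. -/
def accepting (B : BFA α Q) (w : List α) : Q → Prop :=
  w.foldr (fun a v q => B.δ q a v) B.F

@[simp]
theorem accepting_cons (B : BFA α Q) (a : α) (w : List α) (q : Q) :
    B.accepting (a :: w) q = B.δ q a (B.accepting w) :=
  rfl

theorem foldl_subst_apply (B : BFA α Q) (G : (Q → Prop) → Prop) (w : List α) (v : Q → Prop) :
    w.foldl (fun G a => fun v => G (fun q => B.δ q a v)) G v
      = G (w.foldr (fun a v q => B.δ q a v) v) := by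
  induction w generalizing G with
  | nil => rfl
  | cons a w ih => exact ih _

theorem accepts_iff_accepting (B : BFA α Q) (w : List α) :
    B.Accepts w ↔ B.I (B.accepting w) :=
  Iff.of_eq (B.foldl_subst_apply B.I w B.F)

def ofNFA (M : NFA α Q) : BFA α Q where
  I v := ∃ q ∈ M.start, v q
  F q := q ∈ M.accept
  δ q a v := ∃ q' ∈ M.step q a, v q'

theorem exists_ofNFA_accepting_iff (M : NFA α Q) (S : Set Q) (w : List α) :
    (∃ q ∈ S, (ofNFA M).accepting w q) ↔ w ∈ M.acceptsFrom S := by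
  induction w generalizing S with
  | nil => exact M.nil_mem_acceptsFrom.symm
  | cons a w ih =>
    rw [M.cons_mem_acceptsFrom, ← ih]
    simp only [accepting_cons, ofNFA, NFA.mem_stepSet]
    grind

theorem ofNFA_accepts (M : NFA α Q) (w : List α) : (ofNFA M).Accepts w ↔ w ∈ M.accepts := by
  rw [accepts_iff_accepting]
  exact exists_ofNFA_accepting_iff M M.start w

def compl (B : BFA α Q) : BFA α Q :=
  { B with I := fun v => ¬ B.I v }

theorem compl_accepts (B : BFA α Q) (w : List α) : B.compl.Accepts w ↔ ¬ B.Accepts w := by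
  rw [accepts_iff_accepting, accepts_iff_accepting]
  rfl

def combine (op : Prop → Prop → Prop) (B₁ : BFA α Q₁) (B₂ : BFA α Q₂) : BFA α (Q₁ ⊕ Q₂) where
  I v := op (B₁.I (v ∘ Sum.inl)) (B₂.I (v ∘ Sum.inr))
  F := Sum.elim B₁.F B₂.F
  δ := Sum.elim (fun q a v => B₁.δ q a (v ∘ Sum.inl)) (fun q a v => B₂.δ q a (v ∘ Sum.inr))

theorem combine_accepting (op : Prop → Prop → Prop) (B₁ : BFA α Q₁) (B₂ : BFA α Q₂)
    (w : List α) :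
    (combine op B₁ B₂).accepting w = Sum.elim (B₁.accepting w) (B₂.accepting w) := by
  induction w with
  | nil => rfl
  | cons a w ih =>
    funext q
    cases q with
    | inl q => exact congrArg (B₁.δ q a) (congrArg (· ∘ Sum.inl) ih)
    | inr q => exact congrArg (B₂.δ q a) (congrArg (· ∘ Sum.inr) ih)

theorem combine_accepts (op : Prop → Prop → Prop) (B₁ : BFA α Q₁) (B₂ : BFA α Q₂)
    (w : List α) :
    (combine op B₁ B₂).Accepts w ↔ op (B₁.Accepts w) (B₂.Accepts w) := by
  rw [accepts_iff_accepting, combine_accepting, accepts_iff_accepting, accepts_iff_accepting]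
  rfl

end BFA

namespace RegFormula

variable {α : Type}

def toBFA : (φ : RegFormula α) → BFA α φ.States
  | atom _ _ M => BFA.ofNFA M
  | and φ ψ => BFA.combine And φ.toBFA ψ.toBFA
  | or φ ψ => BFA.combine Or φ.toBFA ψ.toBFA
  | not φ => φ.toBFA.compl

theorem toBFA_accepts (φ : RegFormula α) (x : List α) : φ.toBFA.Accepts x ↔ φ.Sat x := by
  induction φ with
  | atom _ _ M => exact BFA.ofNFA_accepts M x
  | and φ ψ ihφ ihψ => exact (BFA.combine_accepts _ _ _ x).trans (and_congr ihφ ihψ)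
  | or φ ψ ihφ ihψ => exact (BFA.combine_accepts _ _ _ x).trans (or_congr ihφ ihψ)
  | not φ ih => exact (BFA.compl_accepts _ x).trans (not_congr ih)

theorem card_states (φ : RegFormula α) :
    @Fintype.card φ.States φ.statesFintype = φ.sumAtomCards := by
  induction φ with
  | atom => rfl
  | and φ ψ ihφ ihψ | or φ ψ ihφ ihψ =>
    exact (@Fintype.card_sum _ _ φ.statesFintype ψ.statesFintype).trans (congrArg₂ _ ihφ ihψ)
  | not φ ih => exact ih

end RegFormula

/-- Linear-size encoding: the set of words satisfying a single-variable regular-membership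
formula is the language of a BFA whose state type is the disjoint sum of the atoms' state
types, and this BFA has exactly `n₁ + ⋯ + n_k` states, linear in the size of the input. -/
theorem RegFormula.exists_bfa_states {α : Type} (φ : RegFormula α) :
    (∃ B : BFA α φ.States, ∀ x : List α, B.Accepts x ↔ φ.Sat x) ∧
      @Fintype.card φ.States φ.statesFintype = φ.sumAtomCards :=
  ⟨⟨φ.toBFA, φ.toBFA_accepts⟩, φ.card_states⟩
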